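/- arXiv:2406.03302 — 3 statements merged into one kernel-verified Lean document; each statement's English description precedes it below -/
import Mathlib

section
/- Assume (i) consistency for a=0 (A(ω)=0 implies Y⁰(ω)=Y(ω)), (ii) conditional mean exchangeability over A in the trial for a=0 (E[Y⁰|X=x,S=1]=E[Y⁰|X=x,S=1,A=0] whenever P(X=x,S=1)>0), (iii) positivity of treatment 0 in the trial (P(A=0|X=x,S=1)>0 whenever P(X=x,S=1)>0), (iv) mean transportability for a=0 (E[Y⁰|X=x,S=1]=E[Y⁰|X=x,S=0] whenever both P(X=x,S=1)>0 and P(X=x,S=0)>0), and (v) uniform use of treatment 0 in the external data (P(A=0|S=0)=1). Then for every x with P(X=x,S=1)>0 and P(X=x,S=0)>0, E[Y | X=x, S=1, A=0] = E[Y | X=x, S=0, A=0]. -/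
/-! Consistency replaces `Y` by `Y⁰` on the event `A = 0`. Exchangeability and transportability then
carry `E[Y⁰ | X = x, S = 1, A = 0]` to `E[Y⁰ | X = x, S = 0]`, and since `A = 0` almost surely
in the external data (`S = 0`), conditioning there further on `A = 0` changes nothing. -/

open Finset
open scoped Classical

noncomputable def pr {Ω : Type*} [Fintype Ω] (P : Ω → ℝ) (E : Ω → Prop) : ℝ :=
  ∑ ω, if E ω then P ω else 0

noncomputable def cexp {Ω : Type*} [Fintype Ω] (P : Ω → ℝ) (Y : Ω → ℝ) (E : Ω → Prop) : ℝ :=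
  (∑ ω, if E ω then Y ω * P ω else 0) / pr P E

noncomputable def cpr {Ω : Type*} [Fintype Ω] (P : Ω → ℝ) (E F : Ω → Prop) : ℝ :=
  pr P (fun ω => E ω ∧ F ω) / pr P F

section

variable {Ω : Type*} [Fintype Ω] (P : Ω → ℝ)

lemma pr_and_add_pr_not_and (E F : Ω → Prop) :
    pr P (fun ω => E ω ∧ F ω) + pr P (fun ω => ¬E ω ∧ F ω) = pr P F := by
  unfold pr
  rw [← sum_add_distrib]
  refine sum_congr rfl fun ω _ => ?_
  by_cases hE : E ω <;> by_cases hF : F ω <;> simp [hE, hF]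

lemma eq_zero_of_pr_eq_zero (hP : ∀ ω, 0 ≤ P ω) {E : Ω → Prop} (h : pr P E = 0) {ω : Ω}
    (hω : E ω) : P ω = 0 := by
  have hnonneg : ∀ ω ∈ univ, 0 ≤ if E ω then P ω else 0 := fun ω _ => by
    split_ifs
    exacts [hP ω, le_rfl]
  simpa [hω] using (sum_eq_zero_iff_of_nonneg hnonneg).mp h ω (mem_univ ω)

-- If `pr P F = 0` then `cpr P E F` is the junk value `0 / 0 = 0`.
lemma pr_ne_zero_of_cpr_eq_one {E F : Ω → Prop} (h : cpr P E F = 1) : pr P F ≠ 0 := by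
  intro hF
  simp [cpr, hF] at h

lemma pr_not_and_eq_zero_of_cpr_eq_one {E F : Ω → Prop} (h : cpr P E F = 1) :
    pr P (fun ω => ¬E ω ∧ F ω) = 0 := by
  have hEF : pr P (fun ω => E ω ∧ F ω) = pr P F :=
    (div_eq_one_iff_eq (pr_ne_zero_of_cpr_eq_one P h)).mp h
  linarith [pr_and_add_pr_not_and P E F]

lemma of_cpr_eq_one (hP : ∀ ω, 0 ≤ P ω) {E F : Ω → Prop} (h : cpr P E F = 1) {ω : Ω}
    (hPω : P ω ≠ 0) (hF : F ω) : E ω := by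
  by_contra hE
  exact hPω (eq_zero_of_pr_eq_zero P hP (pr_not_and_eq_zero_of_cpr_eq_one P h) ⟨hE, hF⟩)

lemma pr_congr_of_support {E F : Ω → Prop} (h : ∀ ω, P ω ≠ 0 → (E ω ↔ F ω)) :
    pr P E = pr P F := by
  refine sum_congr rfl fun ω _ => ?_
  by_cases hP : P ω = 0
  · simp [hP]
  · simp [h ω hP]

lemma cexp_congr_of_support (Y : Ω → ℝ) {E F : Ω → Prop} (h : ∀ ω, P ω ≠ 0 → (E ω ↔ F ω)) :
    cexp P Y E = cexp P Y F := by
  unfold cexp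
  rw [pr_congr_of_support P h]
  congr 1
  refine sum_congr rfl fun ω _ => ?_
  by_cases hP : P ω = 0
  · simp [hP]
  · simp [h ω hP]

lemma cexp_congr_fun {Y Z : Ω → ℝ} {E : Ω → Prop} (h : ∀ ω, E ω → Y ω = Z ω) :
    cexp P Y E = cexp P Z E := by
  unfold cexp
  congr 1
  refine sum_congr rfl fun ω _ => ?_
  split_ifs with hE
  · rw [h ω hE]
  · rfl

end

theorem stmt1_general    {Ω 𝓧 : Type*} [Fintype Ω]
    (P : Ω → ℝ) (hP : ∀ ω, 0 ≤ P ω)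
    (X : Ω → 𝓧) (S : Ω → ℕ) (A : Ω → ℕ) (Y : Ω → ℝ)
    (Y0 : Ω → ℝ)
    (hcons : ∀ ω, A ω = 0 → Y0 ω = Y ω)
    (hexch : ∀ x, 0 < pr P (fun ω => X ω = x ∧ S ω = 1) → cexp P Y0 (fun ω => X ω = x ∧ S ω = 1) = cexp P Y0 (fun ω => X ω = x ∧ S ω = 1 ∧ A ω = 0))
    (htrans : ∀ x, 0 < pr P (fun ω => X ω = x ∧ S ω = 1) → 0 < pr P (fun ω => X ω = x ∧ S ω = 0) → cexp P Y0 (fun ω => X ω = x ∧ S ω = 1) = cexp P Y0 (fun ω => X ω = x ∧ S ω = 0))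
    (huniform : cpr P (fun ω => A ω = 0) (fun ω => S ω = 0) = 1)
    : ∀ x, 0 < pr P (fun ω => X ω = x ∧ S ω = 1) → 0 < pr P (fun ω => X ω = x ∧ S ω = 0) →
      cexp P Y (fun ω => X ω = x ∧ S ω = 1 ∧ A ω = 0) = cexp P Y (fun ω => X ω = x ∧ S ω = 0 ∧ A ω = 0) := by
  intro x h1 h0
  have htreated_of_external : ∀ ω, P ω ≠ 0 → S ω = 0 → A ω = 0 := fun ω hPω hS =>
    of_cpr_eq_one P hP huniform hPω hS
  calc cexp P Y (fun ω => X ω = x ∧ S ω = 1 ∧ A ω = 0)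
      = cexp P Y0 (fun ω => X ω = x ∧ S ω = 1 ∧ A ω = 0) :=
        cexp_congr_fun P fun ω hω => (hcons ω hω.2.2).symm
    _ = cexp P Y0 (fun ω => X ω = x ∧ S ω = 1) := (hexch x h1).symm
    _ = cexp P Y0 (fun ω => X ω = x ∧ S ω = 0) := htrans x h1 h0
    _ = cexp P Y0 (fun ω => X ω = x ∧ S ω = 0 ∧ A ω = 0) :=
        cexp_congr_of_support P Y0 fun ω hPω =>
          ⟨fun ⟨hX, hS⟩ => ⟨hX, hS, htreated_of_external ω hPω hS⟩, fun ⟨hX, hS, _⟩ => ⟨hX, hS⟩⟩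
    _ = cexp P Y (fun ω => X ω = x ∧ S ω = 0 ∧ A ω = 0) :=
        cexp_congr_fun P fun ω hω => hcons ω hω.2.2

theorem stmt1    {Ω 𝓧 : Type*} [Fintype Ω] [Fintype 𝓧]
    (P : Ω → ℝ) (hP : ∀ ω, 0 ≤ P ω) (hPsum : ∑ ω, P ω = 1)
    (X : Ω → 𝓧) (S : Ω → ℕ) (A : Ω → ℕ) (Y : Ω → ℝ)
    (Y0 : Ω → ℝ)
    (hS0 : 0 < pr P (fun ω => S ω = 0))
    (hcons : ∀ ω, A ω = 0 → Y0 ω = Y ω)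
    (hexch : ∀ x, 0 < pr P (fun ω => X ω = x ∧ S ω = 1) → cexp P Y0 (fun ω => X ω = x ∧ S ω = 1) = cexp P Y0 (fun ω => X ω = x ∧ S ω = 1 ∧ A ω = 0))
    (hpos : ∀ x, 0 < pr P (fun ω => X ω = x ∧ S ω = 1) → 0 < cpr P (fun ω => A ω = 0) (fun ω => X ω = x ∧ S ω = 1))
    (htrans : ∀ x, 0 < pr P (fun ω => X ω = x ∧ S ω = 1) → 0 < pr P (fun ω => X ω = x ∧ S ω = 0) → cexp P Y0 (fun ω => X ω = x ∧ S ω = 1) = cexp P Y0 (fun ω => X ω = x ∧ S ω = 0))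
    (huniform : cpr P (fun ω => A ω = 0) (fun ω => S ω = 0) = 1)
    : ∀ x, 0 < pr P (fun ω => X ω = x ∧ S ω = 1) → 0 < pr P (fun ω => X ω = x ∧ S ω = 0) →
      cexp P Y (fun ω => X ω = x ∧ S ω = 1 ∧ A ω = 0) = cexp P Y (fun ω => X ω = x ∧ S ω = 0 ∧ A ω = 0) :=
  stmt1_general P hP X S A Y Y0 hcons hexch htrans huniform
end

section
/- Assume: consistency for a=0 and a=2; conditional mean exchangeability over A in the trial for a=0 and trial positivity P(A=0|X=x,S=1)>0; conditional exchangeability over A in the external data for a=0 and a=2 with external treatment positivity P(A=0|X=x,S=0)>0 and P(A=2|X=x,S=0)>0; external-source positivity P(S=0|X=x)>0 for x with P(X=x,S=1)>0; and transportability of conditional difference effect measures: E[Yᵃ − Yᵃ' | X=x, S=1] = E[Yᵃ − Yᵃ' | X=x, S=0] for (a,a') = (2,0) whenever both P(X=x,S=1)>0 and P(X=x,S=0)>0. Then E[Y² | S=1] = λ := γ_{0,2} + (γ_{1,0} − γ_{0,0}), where γ_{s,a} = Σ_x E[Y|X=x,S=s,A=a]·P(X=x|S=1). -/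
open Finset
open scoped Classical

/-!
Within each stratum `X = x` of the trial, transportability of the difference `Y² - Y⁰` gives
`E[Y² | x, S=1] = E[Y² | x, S=0] + (E[Y⁰ | x, S=1] - E[Y⁰ | x, S=0])`, and exchangeability with
consistency turns each term on the right into a mean of the observed `Y` in the corresponding
treatment arm. Averaging over `X` with the trial weights `P(X = x | S = 1)` (law of total
expectation) gives the result.
-/

section Pr

variable {Ω : Type*} [Fintype Ω] {P : Ω → ℝ}

lemma pr_nonneg (hP : ∀ ω, 0 ≤ P ω) (E : Ω → Prop) : 0 ≤ pr P E :=
  Finset.sum_nonneg fun ω _ => by split_ifs <;> simp [hP ω]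

lemma pr_congr {E F : Ω → Prop} (h : ∀ ω, E ω ↔ F ω) : pr P E = pr P F := by
  simp only [pr, h]

lemma pr_and_pos_of_cpr_pos (hP : ∀ ω, 0 ≤ P ω) {E F : Ω → Prop} (h : 0 < cpr P E F) :
    0 < pr P (fun ω => E ω ∧ F ω) := by
  refine (pr_nonneg hP _).lt_of_ne fun h0 => ?_
  simp [cpr, ← h0] at h

lemma cexp_congr {f g : Ω → ℝ} {E : Ω → Prop} (h : ∀ ω, E ω → f ω = g ω) :
    cexp P f E = cexp P g E := by
  unfold cexp
  congr 1
  refine Finset.sum_congr rfl fun ω _ => ?_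
  split_ifs with hω
  · rw [h ω hω]
  · rfl

lemma cexp_sub (f g : Ω → ℝ) (E : Ω → Prop) :
    cexp P (fun ω => f ω - g ω) E = cexp P f E - cexp P g E := by
  simp only [cexp, ← sub_div, ← Finset.sum_sub_distrib]
  congr 1
  refine Finset.sum_congr rfl fun ω _ => ?_
  split_ifs <;> ring

/-- Valid also when `pr P E = 0`: then `P` vanishes on `E`, and both sides are `0`. -/
lemma cexp_mul_pr (hP : ∀ ω, 0 ≤ P ω) (f : Ω → ℝ) (E : Ω → Prop) :
    cexp P f E * pr P E = ∑ ω, if E ω then f ω * P ω else 0 := by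
  by_cases hE : pr P E = 0
  · have hPE : ∀ ω, E ω → P ω = 0 := fun ω hω => by
      simpa [hω] using (Finset.sum_eq_zero_iff_of_nonneg
        (fun ω _ => by split_ifs <;> simp [hP ω])).mp hE ω (mem_univ ω)
    rw [hE, mul_zero, eq_comm]
    exact Finset.sum_eq_zero fun ω _ => by split_ifs with hω <;> simp [hPE ω, hω]
  · exact div_mul_cancel₀ _ hE

lemma cexp_eq_sum_filter_cexp_mul_pr_div {𝓧 : Type*} [Fintype 𝓧] (hP : ∀ ω, 0 ≤ P ω) (X : Ω → 𝓧)
    (f : Ω → ℝ) (E : Ω → Prop) :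
    cexp P f E = ∑ x ∈ univ.filter (fun x => 0 < pr P (fun ω => X ω = x ∧ E ω)),
      cexp P f (fun ω => X ω = x ∧ E ω) * (pr P (fun ω => X ω = x ∧ E ω) / pr P E) := by
  simp only [← mul_div_assoc, ← Finset.sum_div]
  rw [Finset.sum_filter_of_ne fun x _ hx => (pr_nonneg hP _).lt_of_ne
    fun h0 => hx (by rw [← h0, mul_zero])]
  simp only [cexp_mul_pr hP]
  unfold cexp
  congr 1
  rw [Finset.sum_comm]
  refine Finset.sum_congr rfl fun ω _ => ?_
  simp [ite_and, eq_comm]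

lemma cexp_eq_add_sub_of_cexp_sub_eq {Y₁ Y₀ : Ω → ℝ} {E F : Ω → Prop}
    (h : cexp P (fun ω => Y₁ ω - Y₀ ω) E = cexp P (fun ω => Y₁ ω - Y₀ ω) F) :
    cexp P Y₁ E = cexp P Y₁ F + (cexp P Y₀ E - cexp P Y₀ F) := by
  rw [cexp_sub, cexp_sub] at h
  linarith

end Pr

theorem stmt7_general    {Ω 𝓧 : Type*} [Fintype Ω] [Fintype 𝓧]
    (P : Ω → ℝ) (hP : ∀ ω, 0 ≤ P ω)
    (X : Ω → 𝓧) (S : Ω → ℕ) (A : Ω → ℕ) (Y : Ω → ℝ)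
    (Y0 Y2 : Ω → ℝ)
    (hcons0 : ∀ ω, A ω = 0 → Y0 ω = Y ω)
    (hcons2 : ∀ ω, A ω = 2 → Y2 ω = Y ω)
    (hexch0 : ∀ x, 0 < pr P (fun ω => X ω = x ∧ S ω = 1) → cexp P Y0 (fun ω => X ω = x ∧ S ω = 1) = cexp P Y0 (fun ω => X ω = x ∧ S ω = 1 ∧ A ω = 0))
    (hexchext0 : ∀ x, 0 < pr P (fun ω => X ω = x ∧ S ω = 0) → cexp P Y0 (fun ω => X ω = x ∧ S ω = 0) = cexp P Y0 (fun ω => X ω = x ∧ S ω = 0 ∧ A ω = 0))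
    (hexchext2 : ∀ x, 0 < pr P (fun ω => X ω = x ∧ S ω = 0) → cexp P Y2 (fun ω => X ω = x ∧ S ω = 0) = cexp P Y2 (fun ω => X ω = x ∧ S ω = 0 ∧ A ω = 2))
    (hextpos : ∀ x, 0 < pr P (fun ω => X ω = x ∧ S ω = 1) → 0 < cpr P (fun ω => S ω = 0) (fun ω => X ω = x))
    (htransdiff : ∀ x, 0 < pr P (fun ω => X ω = x ∧ S ω = 1) → 0 < pr P (fun ω => X ω = x ∧ S ω = 0) →
      cexp P (fun ω => Y2 ω - Y0 ω) (fun ω => X ω = x ∧ S ω = 1) =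
      cexp P (fun ω => Y2 ω - Y0 ω) (fun ω => X ω = x ∧ S ω = 0))
    : cexp P Y2 (fun ω => S ω = 1) =
      (∑ x ∈ univ.filter (fun x => 0 < pr P (fun ω => X ω = x ∧ S ω = 1)),
        cexp P Y (fun ω => X ω = x ∧ S ω = 0 ∧ A ω = 2) * (pr P (fun ω => X ω = x ∧ S ω = 1) / pr P (fun ω => S ω = 1))) +
      ((∑ x ∈ univ.filter (fun x => 0 < pr P (fun ω => X ω = x ∧ S ω = 1)),
        cexp P Y (fun ω => X ω = x ∧ S ω = 1 ∧ A ω = 0) * (pr P (fun ω => X ω = x ∧ S ω = 1) / pr P (fun ω => S ω = 1))) -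
      (∑ x ∈ univ.filter (fun x => 0 < pr P (fun ω => X ω = x ∧ S ω = 1)),
        cexp P Y (fun ω => X ω = x ∧ S ω = 0 ∧ A ω = 0) * (pr P (fun ω => X ω = x ∧ S ω = 1) / pr P (fun ω => S ω = 1)))) := by
  rw [cexp_eq_sum_filter_cexp_mul_pr_div hP X, ← Finset.sum_sub_distrib, ← Finset.sum_add_distrib]
  refine Finset.sum_congr rfl fun x hx => ?_
  have hx1 : 0 < pr P (fun ω => X ω = x ∧ S ω = 1) := (mem_filter.mp hx).2
  have hx0 : 0 < pr P (fun ω => X ω = x ∧ S ω = 0) :=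
    (pr_congr fun ω => and_comm).trans_gt (pr_and_pos_of_cpr_pos hP (hextpos x hx1))
  have hY0trial : cexp P Y0 (fun ω => X ω = x ∧ S ω = 1) =
      cexp P Y (fun ω => X ω = x ∧ S ω = 1 ∧ A ω = 0) :=
    (hexch0 x hx1).trans (cexp_congr fun ω hω => hcons0 ω hω.2.2)
  have hY0ext : cexp P Y0 (fun ω => X ω = x ∧ S ω = 0) =
      cexp P Y (fun ω => X ω = x ∧ S ω = 0 ∧ A ω = 0) :=
    (hexchext0 x hx0).trans (cexp_congr fun ω hω => hcons0 ω hω.2.2)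
  have hY2ext : cexp P Y2 (fun ω => X ω = x ∧ S ω = 0) =
      cexp P Y (fun ω => X ω = x ∧ S ω = 0 ∧ A ω = 2) :=
    (hexchext2 x hx0).trans (cexp_congr fun ω hω => hcons2 ω hω.2.2)
  rw [cexp_eq_add_sub_of_cexp_sub_eq (htransdiff x hx1 hx0), hY2ext, hY0trial, hY0ext]
  ring

theorem stmt7    {Ω 𝓧 : Type*} [Fintype Ω] [Fintype 𝓧]
    (P : Ω → ℝ) (hP : ∀ ω, 0 ≤ P ω) (hPsum : ∑ ω, P ω = 1)
    (X : Ω → 𝓧) (S : Ω → ℕ) (A : Ω → ℕ) (Y : Ω → ℝ)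
    (Y0 Y2 : Ω → ℝ)
    (hS1 : 0 < pr P (fun ω => S ω = 1))
    (hcons0 : ∀ ω, A ω = 0 → Y0 ω = Y ω)
    (hcons2 : ∀ ω, A ω = 2 → Y2 ω = Y ω)
    (hexch0 : ∀ x, 0 < pr P (fun ω => X ω = x ∧ S ω = 1) → cexp P Y0 (fun ω => X ω = x ∧ S ω = 1) = cexp P Y0 (fun ω => X ω = x ∧ S ω = 1 ∧ A ω = 0))
    (hpos0 : ∀ x, 0 < pr P (fun ω => X ω = x ∧ S ω = 1) → 0 < cpr P (fun ω => A ω = 0) (fun ω => X ω = x ∧ S ω = 1))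
    (hexchext0 : ∀ x, 0 < pr P (fun ω => X ω = x ∧ S ω = 0) → cexp P Y0 (fun ω => X ω = x ∧ S ω = 0) = cexp P Y0 (fun ω => X ω = x ∧ S ω = 0 ∧ A ω = 0))
    (hexchext2 : ∀ x, 0 < pr P (fun ω => X ω = x ∧ S ω = 0) → cexp P Y2 (fun ω => X ω = x ∧ S ω = 0) = cexp P Y2 (fun ω => X ω = x ∧ S ω = 0 ∧ A ω = 2))
    (hposext0 : ∀ x, 0 < pr P (fun ω => X ω = x ∧ S ω = 0) → 0 < cpr P (fun ω => A ω = 0) (fun ω => X ω = x ∧ S ω = 0))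
    (hposext2 : ∀ x, 0 < pr P (fun ω => X ω = x ∧ S ω = 0) → 0 < cpr P (fun ω => A ω = 2) (fun ω => X ω = x ∧ S ω = 0))
    (hextpos : ∀ x, 0 < pr P (fun ω => X ω = x ∧ S ω = 1) → 0 < cpr P (fun ω => S ω = 0) (fun ω => X ω = x))
    (htransdiff : ∀ x, 0 < pr P (fun ω => X ω = x ∧ S ω = 1) → 0 < pr P (fun ω => X ω = x ∧ S ω = 0) →
      cexp P (fun ω => Y2 ω - Y0 ω) (fun ω => X ω = x ∧ S ω = 1) =
      cexp P (fun ω => Y2 ω - Y0 ω) (fun ω => X ω = x ∧ S ω = 0))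
    : cexp P Y2 (fun ω => S ω = 1) =
      (∑ x ∈ univ.filter (fun x => 0 < pr P (fun ω => X ω = x ∧ S ω = 1)),
        cexp P Y (fun ω => X ω = x ∧ S ω = 0 ∧ A ω = 2) * (pr P (fun ω => X ω = x ∧ S ω = 1) / pr P (fun ω => S ω = 1))) +
      ((∑ x ∈ univ.filter (fun x => 0 < pr P (fun ω => X ω = x ∧ S ω = 1)),
        cexp P Y (fun ω => X ω = x ∧ S ω = 1 ∧ A ω = 0) * (pr P (fun ω => X ω = x ∧ S ω = 1) / pr P (fun ω => S ω = 1))) -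
      (∑ x ∈ univ.filter (fun x => 0 < pr P (fun ω => X ω = x ∧ S ω = 1)),
        cexp P Y (fun ω => X ω = x ∧ S ω = 0 ∧ A ω = 0) * (pr P (fun ω => X ω = x ∧ S ω = 1) / pr P (fun ω => S ω = 1)))) :=
  stmt7_general P hP X S A Y Y0 Y2 hcons0 hcons2 hexch0 hexchext0 hexchext2 hextpos htransdiff
end

section
/- Assume: consistency for a=2; mean transportability for a=2 over S (E[Y²|X=x,S=1]=E[Y²|X=x,S=0] whenever both events have positive probability); external-source positivity P(S=0|X=x)>0 for x with P(X=x,S=1)>0; conditional exchangeability over A given (X,W) in the external data for a=2 (E[Y²|X=x,W=w,S=0]=E[Y²|X=x,W=w,S=0,A=2] whenever P(X=x,W=w,S=0)>0); and positivity P(A=2|X=x,W=w,S=0)>0 whenever P(X=x,W=w,S=0)>0. Then E[Y² | S=1] = μ := Σ_x P(X=x|S=1) · Σ_w E[Y|X=x,W=w,S=0,A=2] · P(W=w|X=x,S=0), with the outer sum over x with P(X=x,S=1)>0 and the inner sum over w with P(X=x,W=w,S=0)>0. -/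
open Finset
open scoped Classical

/-!
Identification by iterated expectation. By the law of total expectation over `X`, `E[Y² | S = 1]`
is the `P(X = x | S = 1)`-average of `E[Y² | X = x, S = 1]`; transportability (usable because
external positivity makes `P(X = x, S = 0) > 0`) replaces this by `E[Y² | X = x, S = 0]`, which by
total expectation over `W` is the `P(W = w | X = x, S = 0)`-average of `E[Y² | X = x, W = w, S = 0]`.
Exchangeability adds `A = 2` to the conditioning event, and on `A = 2` consistency gives `Y² = Y`.
-/

namespace FinitePr

variable {Ω : Type*} [Fintype Ω] (P : Ω → ℝ)

lemma pr_nonneg (hP : ∀ ω, 0 ≤ P ω) (E : Ω → Prop) : 0 ≤ pr P E :=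
  sum_nonneg fun ω _ => by split_ifs <;> simp [hP ω]

lemma pr_congr {E F : Ω → Prop} (h : ∀ ω, E ω ↔ F ω) : pr P E = pr P F := by
  simp only [pr, h]

lemma cexp_congr (Y : Ω → ℝ) {E F : Ω → Prop} (h : ∀ ω, E ω ↔ F ω) :
    cexp P Y E = cexp P Y F := by
  simp only [cexp, pr, h]

lemma cexp_congr_of_imp_eq {Y Z : Ω → ℝ} {E : Ω → Prop} (h : ∀ ω, E ω → Y ω = Z ω) :
    cexp P Y E = cexp P Z E := by
  unfold cexp
  congr 1
  exact sum_congr rfl fun ω _ => by split_ifs with hω <;> simp [h ω, hω]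

lemma pr_pos_of_cpr_pos (hP : ∀ ω, 0 ≤ P ω) {E F : Ω → Prop} (h : 0 < cpr P E F) :
    0 < pr P (fun ω => E ω ∧ F ω) := by
  refine (pr_nonneg P hP _).lt_of_ne fun h0 => ?_
  simp [cpr, ← h0] at h

noncomputable def expOn (Y : Ω → ℝ) (E : Ω → Prop) : ℝ :=
  ∑ ω, if E ω then Y ω * P ω else 0

lemma cexp_eq_expOn_div (Y : Ω → ℝ) (E : Ω → Prop) : cexp P Y E = expOn P Y E / pr P E := rfl

lemma expOn_eq_zero_of_pr_eq_zero (hP : ∀ ω, 0 ≤ P ω) (Y : Ω → ℝ) {E : Ω → Prop}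
    (h : pr P E = 0) : expOn P Y E = 0 := by
  have hzero := (sum_eq_zero_iff_of_nonneg fun ω _ => ?_).mp h
  · refine sum_eq_zero fun ω _ => ?_
    have := hzero ω (mem_univ ω)
    split_ifs at this ⊢ <;> simp [this]
  · split_ifs <;> simp [hP ω]

lemma sum_expOn_fiber {ι : Type*} [Fintype ι] (Y : Ω → ℝ) (E : Ω → Prop) (f : Ω → ι) :
    ∑ i, expOn P Y (fun ω => f ω = i ∧ E ω) = expOn P Y E := by
  unfold expOn
  rw [sum_comm]
  refine sum_congr rfl fun ω _ => ?_
  by_cases hω : E ω <;> simp [hω]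

lemma pr_div_mul_cexp (Y : Ω → ℝ) (E : Ω → Prop) {F : Ω → Prop} (hF : pr P F ≠ 0) :
    pr P F / pr P E * cexp P Y F = expOn P Y F / pr P E := by
  rw [cexp_eq_expOn_div]
  field_simp

lemma cexp_eq_sum_fiber {ι : Type*} [Fintype ι] (hP : ∀ ω, 0 ≤ P ω) (Y : Ω → ℝ)
    (E : Ω → Prop) (f : Ω → ι) :
    cexp P Y E = ∑ i ∈ univ.filter (fun i => 0 < pr P (fun ω => f ω = i ∧ E ω)),
      pr P (fun ω => f ω = i ∧ E ω) / pr P E * cexp P Y (fun ω => f ω = i ∧ E ω) := by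
  rw [sum_congr rfl fun i hi => pr_div_mul_cexp P Y E (mem_filter.mp hi).2.ne', ← sum_div,
    cexp_eq_expOn_div, ← sum_expOn_fiber P Y E f, sum_filter_of_ne]
  intro i _ hne
  exact (pr_nonneg P hP _).lt_of_ne fun h0 => hne (expOn_eq_zero_of_pr_eq_zero P hP Y h0.symm)

end FinitePr

open FinitePr

theorem stmt11_general
    {Ω 𝓧 𝓦 : Type*} [Fintype Ω] [Fintype 𝓧] [Fintype 𝓦]
    (P : Ω → ℝ) (hP : ∀ ω, 0 ≤ P ω)
    (X : Ω → 𝓧) (W : Ω → 𝓦) (S : Ω → ℕ) (A : Ω → ℕ) (Y : Ω → ℝ)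
    (Y2 : Ω → ℝ)
    (hcons : ∀ ω, A ω = 2 → Y2 ω = Y ω)
    (htrans : ∀ x, 0 < pr P (fun ω => X ω = x ∧ S ω = 1) → 0 < pr P (fun ω => X ω = x ∧ S ω = 0) → cexp P Y2 (fun ω => X ω = x ∧ S ω = 1) = cexp P Y2 (fun ω => X ω = x ∧ S ω = 0))
    (hextpos : ∀ x, 0 < pr P (fun ω => X ω = x ∧ S ω = 1) → 0 < cpr P (fun ω => S ω = 0) (fun ω => X ω = x))
    (hexchW : ∀ x w, 0 < pr P (fun ω => X ω = x ∧ W ω = w ∧ S ω = 0) →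
      cexp P Y2 (fun ω => X ω = x ∧ W ω = w ∧ S ω = 0) = cexp P Y2 (fun ω => X ω = x ∧ W ω = w ∧ S ω = 0 ∧ A ω = 2))
    : cexp P Y2 (fun ω => S ω = 1) =
      ∑ x ∈ univ.filter (fun x => 0 < pr P (fun ω => X ω = x ∧ S ω = 1)),
        (pr P (fun ω => X ω = x ∧ S ω = 1) / pr P (fun ω => S ω = 1)) *
        ∑ w ∈ univ.filter (fun w => 0 < pr P (fun ω => X ω = x ∧ W ω = w ∧ S ω = 0)),
          cexp P Y (fun ω => X ω = x ∧ W ω = w ∧ S ω = 0 ∧ A ω = 2) *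
          (pr P (fun ω => X ω = x ∧ W ω = w ∧ S ω = 0) / pr P (fun ω => X ω = x ∧ S ω = 0)) := by
  rw [cexp_eq_sum_fiber P hP Y2 _ X]
  refine sum_congr rfl fun x hx => congrArg _ ?_
  have hx1 : 0 < pr P (fun ω => X ω = x ∧ S ω = 1) := (mem_filter.mp hx).2
  have hx0 : 0 < pr P (fun ω => X ω = x ∧ S ω = 0) :=
    (pr_pos_of_cpr_pos P hP (hextpos x hx1)).trans_eq (pr_congr P fun _ => and_comm)
  have hswap : ∀ w ω, (W ω = w ∧ X ω = x ∧ S ω = 0) ↔ (X ω = x ∧ W ω = w ∧ S ω = 0) :=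
    fun _ _ => and_left_comm
  rw [htrans x hx1 hx0, cexp_eq_sum_fiber P hP Y2 _ W]
  simp only [pr_congr P (hswap _), cexp_congr P Y2 (hswap _)]
  refine sum_congr rfl fun w hw => ?_
  rw [hexchW x w (mem_filter.mp hw).2, cexp_congr_of_imp_eq P fun ω hω => hcons ω hω.2.2.2,
    mul_comm]

theorem stmt11
    {Ω 𝓧 𝓦 : Type*} [Fintype Ω] [Fintype 𝓧] [Fintype 𝓦]
    (P : Ω → ℝ) (hP : ∀ ω, 0 ≤ P ω) (hPsum : ∑ ω, P ω = 1)
    (X : Ω → 𝓧) (W : Ω → 𝓦) (S : Ω → ℕ) (A : Ω → ℕ) (Y : Ω → ℝ)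
    (Y2 : Ω → ℝ)
    (hS1 : 0 < pr P (fun ω => S ω = 1))
    (hcons : ∀ ω, A ω = 2 → Y2 ω = Y ω)
    (htrans : ∀ x, 0 < pr P (fun ω => X ω = x ∧ S ω = 1) → 0 < pr P (fun ω => X ω = x ∧ S ω = 0) → cexp P Y2 (fun ω => X ω = x ∧ S ω = 1) = cexp P Y2 (fun ω => X ω = x ∧ S ω = 0))
    (hextpos : ∀ x, 0 < pr P (fun ω => X ω = x ∧ S ω = 1) → 0 < cpr P (fun ω => S ω = 0) (fun ω => X ω = x))
    (hexchW : ∀ x w, 0 < pr P (fun ω => X ω = x ∧ W ω = w ∧ S ω = 0) →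
      cexp P Y2 (fun ω => X ω = x ∧ W ω = w ∧ S ω = 0) = cexp P Y2 (fun ω => X ω = x ∧ W ω = w ∧ S ω = 0 ∧ A ω = 2))
    (hposW : ∀ x w, 0 < pr P (fun ω => X ω = x ∧ W ω = w ∧ S ω = 0) →
      0 < cpr P (fun ω => A ω = 2) (fun ω => X ω = x ∧ W ω = w ∧ S ω = 0))
    : cexp P Y2 (fun ω => S ω = 1) =
      ∑ x ∈ univ.filter (fun x => 0 < pr P (fun ω => X ω = x ∧ S ω = 1)),
        (pr P (fun ω => X ω = x ∧ S ω = 1) / pr P (fun ω => S ω = 1)) *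
        ∑ w ∈ univ.filter (fun w => 0 < pr P (fun ω => X ω = x ∧ W ω = w ∧ S ω = 0)),
          cexp P Y (fun ω => X ω = x ∧ W ω = w ∧ S ω = 0 ∧ A ω = 2) *
          (pr P (fun ω => X ω = x ∧ W ω = w ∧ S ω = 0) / pr P (fun ω => X ω = x ∧ S ω = 0)) :=
  stmt11_general P hP X W S A Y Y2 hcons htrans hextpos hexchW
end
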